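/- Let V be a 4-dimensional ℂ-vector space and let f be an endomorphism of V whose matrix in some basis of V is diag(J(−1,2), J(1,2)). Then there is a basis of the 6-dimensional space ⋀²V in which the induced endomorphism ⋀²f has matrix diag(J(−1,3), J(−1,1), J(1,1), J(1,1)). -/

import Mathlib

/-- The `n × n` Jordan block with eigenvalue `lam`: every diagonal entry is `lam` and every
entry directly above the diagonal is `1`. -/
def jordanBlock (lam : ℂ) (n : ℕ) : Matrix (Fin n) (Fin n) ℂ :=
  Matrix.of fun i j : Fin n =>
    if (j : ℕ) = (i : ℕ) then lam else if (j : ℕ) = (i : ℕ) + 1 then 1 else 0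

/-- The wedge `v ∧ w` as an element of the second exterior power `⋀[ℂ]^2 V`. -/
def wedge {V : Type*} [AddCommGroup V] [Module ℂ V] (v w : V) : ⋀[ℂ]^2 V :=
  ⟨ExteriorAlgebra.ι ℂ v * ExteriorAlgebra.ι ℂ w, by
    show _ ∈ LinearMap.range (ExteriorAlgebra.ι ℂ (M := V)) ^ 2
    rw [pow_two]
    exact Submodule.mul_mem_mul (LinearMap.mem_range_self _ v) (LinearMap.mem_range_self _ w)⟩

/-!
Write `e₀, e₁, e₂, e₃` for the basis, so that `f e₀ = λ e₀`, `f e₁ = e₀ + λ e₁`, `f e₂ = μ e₂`,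
`f e₃ = e₂ + μ e₃` (here `λ = -1`, `μ = 1`). The wedges `e₀ ∧ e₁` and `e₂ ∧ e₃` are eigenvectors of
`⋀²f` for `λ²` and `μ²`. The four mixed wedges are killed by a power of `⋀²f - λμ`: applying it
twice to `e₁ ∧ e₃` gives `e₀ ∧ e₂ + μ e₀ ∧ e₃ + λ e₁ ∧ e₂` and then `2λμ e₀ ∧ e₂`, a Jordan chain of
length 3, and `μ e₀ ∧ e₃ - λ e₁ ∧ e₂` is one more eigenvector. For `λμ ≠ 0` these six vectors span
`⋀²V`, which has dimension `6`, so they form the required basis.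
-/

section Wedge

variable {V : Type*} [AddCommGroup V] [Module ℂ V]

@[simp] lemma wedge_add_left (u v w : V) : wedge (u + v) w = wedge u w + wedge v w :=
  Subtype.ext <| by simp [wedge, add_mul]

@[simp] lemma wedge_add_right (u v w : V) : wedge u (v + w) = wedge u v + wedge u w :=
  Subtype.ext <| by simp [wedge, mul_add]

@[simp] lemma wedge_smul_left (a : ℂ) (v w : V) : wedge (a • v) w = a • wedge v w :=
  Subtype.ext <| by simp [wedge]

@[simp] lemma wedge_smul_right (a : ℂ) (v w : V) : wedge v (a • w) = a • wedge v w :=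
  Subtype.ext <| by simp [wedge]

@[simp] lemma wedge_self (v : V) : wedge v v = 0 :=
  Subtype.ext <| by simp [wedge]

lemma wedge_comm (v w : V) : wedge w v = -wedge v w :=
  Subtype.ext <| eq_neg_of_add_eq_zero_left (ExteriorAlgebra.ι_add_mul_swap (R := ℂ) w v)

lemma exteriorPower.ιMulti_two (a : Fin 2 → V) :
    exteriorPower.ιMulti ℂ 2 a = wedge (a 0) (a 1) :=
  Subtype.ext <| by simp [ExteriorAlgebra.ιMulti_apply, Matrix.vecTail, wedge]

open Submodule Set in
lemma span_wedge_eq_top {ι : Type*} {b : ι → V} (hb : span ℂ (range b) = ⊤) :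
    span ℂ (range fun p : ι × ι => wedge (b p.1) (b p.2)) = ⊤ := by
  refine eq_top_iff.2 <| (exteriorPower.ιMulti_span_of_span ℂ 2 V hb).ge.trans <| span_mono ?_
  rintro _ ⟨a, ha, rfl⟩
  obtain ⟨i, hi⟩ := ha (mem_range_self 0)
  obtain ⟨j, hj⟩ := ha (mem_range_self 1)
  exact ⟨(i, j), by simp [exteriorPower.ιMulti_two, hi, hj]⟩

open Submodule Set in
lemma top_le_of_wedge_mem {ι : Type*} [LinearOrder ι] {b : ι → V} (hb : span ℂ (range b) = ⊤)
    {S : Submodule ℂ (⋀[ℂ]^2 V)} (hS : ∀ i j, i < j → wedge (b i) (b j) ∈ S) : ⊤ ≤ S := by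
  rw [← span_wedge_eq_top hb, span_le]
  rintro _ ⟨⟨i, j⟩, rfl⟩
  change wedge (b i) (b j) ∈ S
  rcases lt_trichotomy i j with h | rfl | h
  · exact hS i j h
  · simp
  · rw [wedge_comm]
    exact S.neg_mem (hS j i h)

end Wedge

lemma LinearMap.toMatrix_eq_iff {R M₁ M₂ ι₁ ι₂ : Type*} [CommSemiring R] [AddCommMonoid M₁]
    [AddCommMonoid M₂] [Module R M₁] [Module R M₂] [Fintype ι₁] [Fintype ι₂] [DecidableEq ι₁]
    (v₁ : Module.Basis ι₁ R M₁) (v₂ : Module.Basis ι₂ R M₂) (f : M₁ →ₗ[R] M₂)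
    (A : Matrix ι₂ ι₁ R) :
    LinearMap.toMatrix v₁ v₂ f = A ↔ ∀ j, f (v₁ j) = ∑ i, A i j • v₂ i := by
  rw [← LinearEquiv.eq_symm_apply, LinearMap.toMatrix_symm]
  refine ⟨fun h j => by rw [h, Matrix.toLin_self], fun h => v₁.ext fun j => ?_⟩
  rw [h, Matrix.toLin_self]

section JordanWedge

variable {V : Type*} [AddCommGroup V] [Module ℂ V]

noncomputable def jordanWedgeFamily (lam mu : ℂ) (e : Fin 4 → V) :
    Fin 3 ⊕ (Fin 1 ⊕ (Fin 1 ⊕ Fin 1)) → ⋀[ℂ]^2 V :=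
  Sum.elim
    ![(2 * lam * mu) • wedge (e 0) (e 2),
      wedge (e 0) (e 2) + mu • wedge (e 0) (e 3) + lam • wedge (e 1) (e 2),
      wedge (e 1) (e 3)]
    (Sum.elim ![mu • wedge (e 0) (e 3) - lam • wedge (e 1) (e 2)]
      (Sum.elim ![wedge (e 0) (e 1)] ![wedge (e 2) (e 3)]))

variable {lam mu : ℂ} {e : Fin 4 → V}

lemma apply_jordanWedgeFamily {f : V →ₗ[ℂ] V} (h₀ : f (e 0) = lam • e 0)
    (h₁ : f (e 1) = e 0 + lam • e 1) (h₂ : f (e 2) = mu • e 2) (h₃ : f (e 3) = e 2 + mu • e 3)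
    {g : ⋀[ℂ]^2 V →ₗ[ℂ] ⋀[ℂ]^2 V} (hg : ∀ v w, g (wedge v w) = wedge (f v) (f w))
    (j : Fin 3 ⊕ (Fin 1 ⊕ (Fin 1 ⊕ Fin 1))) :
    g (jordanWedgeFamily lam mu e j) =
      ∑ i, Matrix.fromBlocks (jordanBlock (lam * mu) 3) 0 0
        (Matrix.fromBlocks (jordanBlock (lam * mu) 1) 0 0
          (Matrix.fromBlocks (jordanBlock (lam ^ 2) 1) 0 0 (jordanBlock (mu ^ 2) 1))) i j •
        jordanWedgeFamily lam mu e i := by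
  rcases j with j | j | j | j <;> fin_cases j <;>
    simp [jordanWedgeFamily, Fintype.sum_sum_type, Fin.sum_univ_succ, jordanBlock, hg,
      h₀, h₁, h₂, h₃] <;>
    module

open Submodule Set in
lemma top_le_span_jordanWedgeFamily (he : span ℂ (range e) = ⊤) (hlam : lam ≠ 0) (hmu : mu ≠ 0) :
    ⊤ ≤ span ℂ (range (jordanWedgeFamily lam mu e)) := by
  set S := span ℂ (range (jordanWedgeFamily lam mu e))
  have mem k : jordanWedgeFamily lam mu e k ∈ S := subset_span (mem_range_self k)
  have h02 : wedge (e 0) (e 2) ∈ S :=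
    (smul_mem_iff S (by simp [hlam, hmu])).1 (mem (.inl 0))
  have hplus : mu • wedge (e 0) (e 3) + lam • wedge (e 1) (e 2) ∈ S := by
    convert S.sub_mem (mem (.inl 1)) h02 using 1
    simp [jordanWedgeFamily, add_assoc]
  have hminus : mu • wedge (e 0) (e 3) - lam • wedge (e 1) (e 2) ∈ S := mem (.inr (.inl 0))
  have h03 : wedge (e 0) (e 3) ∈ S := by
    refine (smul_mem_iff S (mul_ne_zero two_ne_zero hmu)).1 ?_
    convert S.add_mem hplus hminus using 1
    module
  have h12 : wedge (e 1) (e 2) ∈ S := by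
    refine (smul_mem_iff S (mul_ne_zero two_ne_zero hlam)).1 ?_
    convert S.sub_mem hplus hminus using 1
    module
  refine top_le_of_wedge_mem he fun i j hij => ?_
  fin_cases i <;> fin_cases j <;> try exact absurd hij (by decide)
  exacts [mem (.inr (.inr (.inl 0))), h02, h03, h12, mem (.inl 2), mem (.inr (.inr (.inr 0)))]
end JordanWedge

open Module Set in
theorem exists_basis_toMatrix_exteriorSquare_eq {V : Type*} [AddCommGroup V] [Module ℂ V]
    {lam mu : ℂ} (hlam : lam ≠ 0) (hmu : mu ≠ 0) {f : V →ₗ[ℂ] V} (B : Basis (Fin 2 ⊕ Fin 2) ℂ V)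
    (hB : LinearMap.toMatrix B B f =
      Matrix.fromBlocks (jordanBlock lam 2) 0 0 (jordanBlock mu 2))
    {g : ⋀[ℂ]^2 V →ₗ[ℂ] ⋀[ℂ]^2 V} (hg : ∀ v w, g (wedge v w) = wedge (f v) (f w)) :
    ∃ C : Basis (Fin 3 ⊕ (Fin 1 ⊕ (Fin 1 ⊕ Fin 1))) ℂ (⋀[ℂ]^2 V),
      LinearMap.toMatrix C C g = Matrix.fromBlocks (jordanBlock (lam * mu) 3) 0 0
        (Matrix.fromBlocks (jordanBlock (lam * mu) 1) 0 0
          (Matrix.fromBlocks (jordanBlock (lam ^ 2) 1) 0 0 (jordanBlock (mu ^ 2) 1))) := by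
  have := Module.Finite.of_basis B
  obtain ⟨h₀, h₁, h₂, h₃⟩ : f (B (.inl 0)) = lam • B (.inl 0) ∧
      f (B (.inl 1)) = B (.inl 0) + lam • B (.inl 1) ∧ f (B (.inr 0)) = mu • B (.inr 0) ∧
      f (B (.inr 1)) = B (.inr 0) + mu • B (.inr 1) := by
    rw [LinearMap.toMatrix_eq_iff] at hB
    refine ⟨?_, ?_, ?_, ?_⟩ <;> simp [hB, Fintype.sum_sum_type, Fin.sum_univ_two, jordanBlock]
  let e : Fin 4 → V := B ∘ (finSumFinEquiv (m := 2) (n := 2)).symm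
  have he : Submodule.span ℂ (range e) = ⊤ := by
    rw [range_comp, finSumFinEquiv.symm.range_eq_univ, image_univ, B.span_eq]
  have hcard : Fintype.card (Fin 3 ⊕ (Fin 1 ⊕ (Fin 1 ⊕ Fin 1))) = finrank ℂ (⋀[ℂ]^2 V) := by
    rw [exteriorPower.finrank_eq, finrank_eq_card_basis B]
    rfl
  refine ⟨basisOfTopLeSpanOfCardEqFinrank _ (top_le_span_jordanWedgeFamily he hlam hmu) hcard, ?_⟩
  rw [LinearMap.toMatrix_eq_iff]
  simpa using apply_jordanWedgeFamily (e := e) h₀ h₁ h₂ h₃ hg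

theorem exterior_square_jordan_Jm1_2_J1_2_general (V : Type*) [AddCommGroup V] [Module ℂ V]
    (f : V →ₗ[ℂ] V)
    (B : Module.Basis (Fin 2 ⊕ Fin 2) ℂ V)
    (hB : LinearMap.toMatrix B B f = Matrix.fromBlocks (jordanBlock (-1) 2) 0 0 (jordanBlock 1 2))
    (g : (⋀[ℂ]^2 V) →ₗ[ℂ] (⋀[ℂ]^2 V))
    (hg : ∀ v w : V, g (wedge v w) = wedge (f v) (f w)) :
    ∃ C : Module.Basis (Fin 3 ⊕ (Fin 1 ⊕ (Fin 1 ⊕ Fin 1))) ℂ (⋀[ℂ]^2 V),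
      LinearMap.toMatrix C C g = Matrix.fromBlocks (jordanBlock (-1) 3) 0 0 (Matrix.fromBlocks (jordanBlock (-1) 1) 0 0 (Matrix.fromBlocks (jordanBlock 1 1) 0 0 (jordanBlock 1 1))) := by
  simpa using exists_basis_toMatrix_exteriorSquare_eq (neg_ne_zero.2 one_ne_zero) one_ne_zero B hB hg

/-- If the matrix of the endomorphism `f` of the 4-dimensional ℂ-vector space `V` in some basis is diag(J(−1,2), J(1,2)), then in some basis of the 6-dimensional space ⋀²V the induced endomorphism ⋀²f (characterized by `v ∧ w ↦ f v ∧ f w`) has matrix diag(J(−1,3), J(−1,1), J(1,1), J(1,1)). -/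
theorem exterior_square_jordan_Jm1_2_J1_2 (V : Type*) [AddCommGroup V] [Module ℂ V]
    (hdim : Module.finrank ℂ V = 4)
    (f : V →ₗ[ℂ] V)
    (B : Module.Basis (Fin 2 ⊕ Fin 2) ℂ V)
    (hB : LinearMap.toMatrix B B f = Matrix.fromBlocks (jordanBlock (-1) 2) 0 0 (jordanBlock 1 2))
    (g : (⋀[ℂ]^2 V) →ₗ[ℂ] (⋀[ℂ]^2 V))
    (hg : ∀ v w : V, g (wedge v w) = wedge (f v) (f w)) :
    ∃ C : Module.Basis (Fin 3 ⊕ (Fin 1 ⊕ (Fin 1 ⊕ Fin 1))) ℂ (⋀[ℂ]^2 V),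
      LinearMap.toMatrix C C g = Matrix.fromBlocks (jordanBlock (-1) 3) 0 0 (Matrix.fromBlocks (jordanBlock (-1) 1) 0 0 (Matrix.fromBlocks (jordanBlock 1 1) 0 0 (jordanBlock 1 1))) :=
  exterior_square_jordan_Jm1_2_J1_2_general V f B hB g hg
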